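/- arXiv:2605.25034 — 3 statements merged into one kernel-verified Lean document; each statement's English description precedes it below -/
import Mathlib

section
/- Consider the RCGLS update x^{k+1} = x^k + μ_k p^k with p^k = S_k S_kᵀ Aᵀ r^k + τ_{k−1} p^{k−1}, exact line-search stepsize μ_k = ‖S_kᵀ Aᵀ r^k‖₂²/‖Ap^k‖₂², and previous optimality ⟨x^k − x*, p^{k−1}⟩_{AᵀA} = 0 where x* solves AᵀA x* = Aᵀb. Then ‖x^{k+1} − x*‖²_{AᵀA} = ‖x^k − x*‖²_{AᵀA} − μ_k ‖S_kᵀ Aᵀ r^k‖₂². -/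
open Matrix

/-- One-step RCGLS identity:
`‖x^{k+1} − x*‖²_{AᵀA} = ‖x^k − x*‖²_{AᵀA} − μ_k ‖Skᵀ Aᵀ r^k‖²`. -/
theorem stmt8 {n d q : ℕ} (A : Matrix (Fin n) (Fin d) ℝ) (b : Fin n → ℝ)
    (xstar : Fin d → ℝ) (hstar : Aᵀ.mulVec (A.mulVec xstar) = Aᵀ.mulVec b)
    (xk pkm1 : Fin d → ℝ)
    (horth : A.mulVec (xk - xstar) ⬝ᵥ A.mulVec pkm1 = 0)
    (Sk : Matrix (Fin d) (Fin q) ℝ) (τ : ℝ) :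
    let rk := b - A.mulVec xk
    let w := Skᵀ.mulVec (Aᵀ.mulVec rk)
    let pk := Sk.mulVec w + τ • pkm1
    let μk := (w ⬝ᵥ w) / (A.mulVec pk ⬝ᵥ A.mulVec pk)
    let xk1 := xk + μk • pk
    A.mulVec (xk1 - xstar) ⬝ᵥ A.mulVec (xk1 - xstar) =
      A.mulVec (xk - xstar) ⬝ᵥ A.mulVec (xk - xstar) - μk * (w ⬝ᵥ w) := by
  intro rk w pk μk xk1
  set e := xk - xstar with he
  -- key adjoint identity
  have hdot : ∀ u : Fin d → ℝ, ∀ v : Fin d → ℝ,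
      A.mulVec u ⬝ᵥ A.mulVec v = Aᵀ.mulVec (A.mulVec u) ⬝ᵥ v := by
    intro u v
    rw [Matrix.dotProduct_mulVec, ← Matrix.mulVec_transpose]
  have hdotS : ∀ u : Fin d → ℝ, ∀ v : Fin q → ℝ,
      u ⬝ᵥ Sk.mulVec v = Skᵀ.mulVec u ⬝ᵥ v := by
    intro u v
    rw [Matrix.dotProduct_mulVec, ← Matrix.mulVec_transpose]
  have hAe : Aᵀ.mulVec (A.mulVec e) = -(Aᵀ.mulVec rk) := by
    show Aᵀ.mulVec (A.mulVec (xk - xstar)) = -(Aᵀ.mulVec (b - A.mulVec xk))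
    rw [Matrix.mulVec_sub, Matrix.mulVec_sub, Matrix.mulVec_sub, hstar]
    abel
  have hcross : A.mulVec e ⬝ᵥ A.mulVec pk = -(w ⬝ᵥ w) := by
    have h1 : Aᵀ.mulVec rk ⬝ᵥ pkm1 = 0 := by
      have := hdot e pkm1
      rw [hAe] at this
      have h2 : -(Aᵀ.mulVec rk ⬝ᵥ pkm1) = 0 := by
        rw [← neg_dotProduct, ← this, horth]
      linarith
    have h3 : Aᵀ.mulVec rk ⬝ᵥ Sk.mulVec w = w ⬝ᵥ w := hdotS _ _
    rw [hdot, hAe]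
    show -(Aᵀ.mulVec rk) ⬝ᵥ (Sk.mulVec w + τ • pkm1) = -(w ⬝ᵥ w)
    rw [neg_dotProduct, dotProduct_add, dotProduct_smul, h1, h3]
    simp
  have hexp : xk1 - xstar = e + μk • pk := by
    show xk + μk • pk - xstar = xk - xstar + μk • pk
    abel
  rw [hexp, Matrix.mulVec_add, Matrix.mulVec_smul]
  rw [add_dotProduct, dotProduct_add, dotProduct_add,
    smul_dotProduct, dotProduct_smul, dotProduct_smul,
    smul_dotProduct, dotProduct_comm (A.mulVec pk) (A.mulVec e), hcross]
  set P := A.mulVec pk ⬝ᵥ A.mulVec pk with hP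
  by_cases hP0 : P = 0
  · have hμ : μk = 0 := by
      show (w ⬝ᵥ w) / P = 0
      rw [hP0, div_zero]
    rw [hP0, hμ]
    simp
  · have hμP : μk * P = w ⬝ᵥ w := by
      show (w ⬝ᵥ w) / P * P = w ⬝ᵥ w
      exact div_mul_cancel₀ _ hP0
    have : μk • (μk • P) = μk * (μk * P) := rfl
    rw [this, hμP]
    simp only [smul_eq_mul]
    ring
end

section
/- Let A ∈ ℝ^{n×d}, x* satisfy AᵀA x* = Aᵀ b, and let S be drawn from a distribution 𝒟 with M = 𝔼[SSᵀ/‖AS‖₂²] positive definite. Then for any x, the inequality 𝔼[‖Sᵀ Aᵀ A(x − x*)‖₂² / ‖AS‖₂²] = ‖M^{1/2} AᵀA(x − x*)‖₂² ≥ σ²_min(AM^{1/2}) · ‖x − x*‖²_{AᵀA} holds, where σ_min denotes the smallest nonzero singular value. -/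
/-!
Write `Q = M^{1/2}`, a symmetric matrix with `Q * Q = M`. Then `‖Q g‖² = gᵀ M g`, and expanding
`M` as the weighted sum of the `Sᵢ Sᵢᵀ` turns this quadratic form into the expectation on the left.

For the bound put `B = A Q` and `y = A (x - x*)`. Since `Q` is invertible, `y` lies in the range
of `B`, which equals the range of `B Bᵀ` (the two matrices have the same rank); so `y = B u` with
`u = Bᵀ w` in the row space of `B`. By the definition of `σ²_min`,
`σ²_min(B) ‖u‖² ≤ ‖B u‖² = ‖y‖² = ⟪u, Bᵀ y⟫`, and Cauchy–Schwarz gives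
`σ²_min(B) ‖u‖² ‖y‖² ≤ ‖u‖² ‖Bᵀ y‖²`. Cancelling `‖u‖²` leaves
`σ²_min(B) ‖y‖² ≤ ‖Bᵀ y‖² = ‖Q AᵀA (x - x*)‖²`.
-/

open Matrix

/-- Squared spectral (ℓ2 operator) norm of a real matrix. -/
noncomputable def opNormSq {a b : ℕ} (B : Matrix (Fin a) (Fin b) ℝ) : ℝ :=
  sSup {t : ℝ | ∃ v : Fin b → ℝ, v ⬝ᵥ v = 1 ∧ t = B.mulVec v ⬝ᵥ B.mulVec v}

/-- Squared smallest nonzero singular value of a real matrix, characterized as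
the infimum of the Rayleigh quotient of `BᵀB` over unit vectors in the row
space of `B`. -/
noncomputable def sigmaMinSq {a b : ℕ} (B : Matrix (Fin a) (Fin b) ℝ) : ℝ :=
  sInf {t : ℝ | ∃ v : Fin b → ℝ, (∃ u : Fin a → ℝ, Bᵀ.mulVec u = v) ∧
    v ⬝ᵥ v = 1 ∧ t = B.mulVec v ⬝ᵥ B.mulVec v}

/-- The positive semidefinite square root of a positive semidefinite matrix
(the definition `Matrix.PosSemidef.sqrt` of the older Mathlib, reproduced here). -/
noncomputable def Matrix.PosSemidef.sqrt {n : Type*} [Fintype n] [DecidableEq n] {𝕜 : Type*}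
    [RCLike 𝕜] [PartialOrder 𝕜] {A : Matrix n n 𝕜} (hA : Matrix.PosSemidef A) : Matrix n n 𝕜 :=
  hA.1.eigenvectorUnitary.1 * diagonal ((↑) ∘ (√·) ∘ hA.1.eigenvalues) *
  (star hA.1.eigenvectorUnitary : Matrix n n 𝕜)

namespace Matrix

section DotProduct

variable {ι m n R : Type*} [Fintype m] [Fintype n]

theorem dotProduct_self_nonneg [Ring R] [LinearOrder R] [IsStrictOrderedRing R] (v : n → R) :
    0 ≤ v ⬝ᵥ v :=
  Finset.sum_nonneg fun i _ => mul_self_nonneg (v i)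

theorem dotProduct_sq_le_dotProduct_self_mul_dotProduct_self [CommRing R] [LinearOrder R]
    [IsStrictOrderedRing R] (u v : n → R) : (u ⬝ᵥ v) ^ 2 ≤ (u ⬝ᵥ u) * (v ⬝ᵥ v) := by
  simpa only [dotProduct, sq] using Finset.sum_mul_sq_le_sq_mul_sq Finset.univ u v

theorem transpose_mulVec_dotProduct_self [CommSemiring R] (C : Matrix m n R) (v : m → R) :
    Cᵀ *ᵥ v ⬝ᵥ Cᵀ *ᵥ v = (C * Cᵀ) *ᵥ v ⬝ᵥ v := by
  rw [dotProduct_mulVec, vecMul_transpose, mulVec_mulVec]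

theorem sum_smul_mul_transpose_mulVec_dotProduct [Fintype ι] [CommSemiring R] (w : ι → R)
    (S : ι → Matrix m n R) (v : m → R) :
    (∑ i, w i • (S i * (S i)ᵀ)) *ᵥ v ⬝ᵥ v = ∑ i, w i * ((S i)ᵀ *ᵥ v ⬝ᵥ (S i)ᵀ *ᵥ v) := by
  simp only [sum_mulVec, sum_dotProduct, smul_mulVec, smul_dotProduct,
    transpose_mulVec_dotProduct_self, smul_eq_mul]

theorem range_mulVecLin_mul_transpose [Field R] [LinearOrder R] [IsStrictOrderedRing R]
    (B : Matrix m n R) : LinearMap.range (B * Bᵀ).mulVecLin = LinearMap.range B.mulVecLin := by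
  apply Submodule.eq_of_le_of_finrank_eq
  · rw [mulVecLin_mul]
    exact LinearMap.range_comp_le_range _ _
  · exact rank_self_mul_transpose B

theorem exists_mulVec_transpose_mulVec_eq [Field R] [LinearOrder R] [IsStrictOrderedRing R]
    (B : Matrix m n R) (z : n → R) : ∃ w, B *ᵥ (Bᵀ *ᵥ w) = B *ᵥ z := by
  have hz : B *ᵥ z ∈ LinearMap.range (B * Bᵀ).mulVecLin := by
    rw [range_mulVecLin_mul_transpose]
    exact ⟨z, rfl⟩
  obtain ⟨w, hw⟩ := hz
  exact ⟨w, by rwa [mulVec_mulVec]⟩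

end DotProduct

theorem exists_mul_mulVec_eq_of_isUnit {m n R : Type*} [Fintype n] [DecidableEq n] [CommRing R]
    {Q : Matrix n n R} (hQ : IsUnit Q) (A : Matrix m n R) (v : n → R) :
    ∃ z, (A * Q) *ᵥ z = A *ᵥ v := by
  refine ⟨Q⁻¹ *ᵥ v, ?_⟩
  rw [mulVec_mulVec, mul_nonsing_inv_cancel_right Q A ((isUnit_iff_isUnit_det Q).1 hQ)]

section Sqrt

variable {n : Type*} [Fintype n] [DecidableEq n] {A : Matrix n n ℝ}

theorem PosSemidef.sqrt_eq_cfc (hA : A.PosSemidef) : hA.sqrt = cfc Real.sqrt A := by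
  rw [hA.isHermitian.cfc_eq]
  rfl

theorem PosSemidef.transpose_sqrt (hA : A.PosSemidef) : hA.sqrtᵀ = hA.sqrt := by
  have : hA.sqrt.IsHermitian := hA.sqrt_eq_cfc ▸ cfc_predicate _ _
  simpa only [conjTranspose_eq_transpose_of_trivial] using this.eq

theorem PosSemidef.sqrt_mul_self (hA : A.PosSemidef) : hA.sqrt * hA.sqrt = A := by
  have hspec : spectrum ℝ A ⊆ Set.Ici 0 := by
    rw [hA.isHermitian.spectrum_real_eq_range_eigenvalues]
    rintro _ ⟨i, rfl⟩
    exact hA.eigenvalues_nonneg i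
  rw [sqrt_eq_cfc, ← cfc_mul _ _ A]
  conv_rhs => rw [← cfc_id' ℝ A hA.isHermitian]
  exact cfc_congr fun x hx => Real.mul_self_sqrt (hspec hx)

theorem PosSemidef.sqrt_mulVec_dotProduct_self (hA : A.PosSemidef) (v : n → ℝ) :
    hA.sqrt *ᵥ v ⬝ᵥ hA.sqrt *ᵥ v = A *ᵥ v ⬝ᵥ v := by
  simpa only [transpose_transpose, hA.transpose_sqrt, hA.sqrt_mul_self]
    using transpose_mulVec_dotProduct_self hA.sqrtᵀ v

theorem PosDef.isUnit_sqrt (hA : A.PosDef) : IsUnit hA.posSemidef.sqrt :=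
  isUnit_of_mul_isUnit_left (hA.posSemidef.sqrt_mul_self ▸ hA.isUnit)

end Sqrt

end Matrix

theorem sigmaMinSq_mul_dotProduct_self_le_of_mem_rowSpace {a b : ℕ}
    (B : Matrix (Fin a) (Fin b) ℝ) (w : Fin a → ℝ) :
    sigmaMinSq B * (Bᵀ *ᵥ w ⬝ᵥ Bᵀ *ᵥ w) ≤ B *ᵥ (Bᵀ *ᵥ w) ⬝ᵥ B *ᵥ (Bᵀ *ᵥ w) := by
  set u := Bᵀ *ᵥ w
  rcases (dotProduct_self_nonneg u).eq_or_lt with hu | hu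
  · rw [← hu, mul_zero]
    exact dotProduct_self_nonneg _
  set c := √(u ⬝ᵥ u)
  have hcc : c * c = u ⬝ᵥ u := Real.mul_self_sqrt hu.le
  have hc : c ≠ 0 := (Real.sqrt_pos.2 hu).ne'
  rw [← le_div_iff₀ hu]
  refine csInf_le ⟨0, ?_⟩ ⟨c⁻¹ • u, ⟨c⁻¹ • w, mulVec_smul _ _ _⟩, ?_, ?_⟩
  · rintro _ ⟨v, -, -, rfl⟩
    exact dotProduct_self_nonneg _
  · simp only [smul_dotProduct, dotProduct_smul, smul_eq_mul, ← hcc]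
    field_simp
  · simp only [mulVec_smul, smul_dotProduct, dotProduct_smul, smul_eq_mul, ← hcc]
    field_simp

theorem sigmaMinSq_mul_dotProduct_self_le_of_mem_range {a b : ℕ}
    (B : Matrix (Fin a) (Fin b) ℝ) (z : Fin b → ℝ) :
    sigmaMinSq B * (B *ᵥ z ⬝ᵥ B *ᵥ z) ≤ Bᵀ *ᵥ (B *ᵥ z) ⬝ᵥ Bᵀ *ᵥ (B *ᵥ z) := by
  obtain ⟨w, hw⟩ := exists_mulVec_transpose_mulVec_eq B z
  set y := B *ᵥ z
  set u := Bᵀ *ᵥ w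
  have hσ : sigmaMinSq B * (u ⬝ᵥ u) ≤ y ⬝ᵥ y :=
    hw ▸ sigmaMinSq_mul_dotProduct_self_le_of_mem_rowSpace B w
  have hyy : u ⬝ᵥ Bᵀ *ᵥ y = y ⬝ᵥ y := by
    rw [dotProduct_mulVec, vecMul_transpose, hw]
  have hcs := dotProduct_sq_le_dotProduct_self_mul_dotProduct_self u (Bᵀ *ᵥ y)
  rcases (dotProduct_self_nonneg u).eq_or_lt with hu | hu
  · have : y = 0 := by rw [← hw, dotProduct_self_eq_zero.1 hu.symm, mulVec_zero]
    simp [this]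
  refine le_of_mul_le_mul_right ?_ hu
  calc sigmaMinSq B * (y ⬝ᵥ y) * (u ⬝ᵥ u) = sigmaMinSq B * (u ⬝ᵥ u) * (y ⬝ᵥ y) := by ring
    _ ≤ (y ⬝ᵥ y) * (y ⬝ᵥ y) := mul_le_mul_of_nonneg_right hσ (dotProduct_self_nonneg y)
    _ ≤ _ := by rw [← sq, ← hyy, mul_comm]; exact hcs

theorem stmt11_general {n d q : ℕ} {ι : Type*} [Fintype ι]
    (A : Matrix (Fin n) (Fin d) ℝ)
    (xstar : Fin d → ℝ)
    (p : ι → ℝ)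
    (S : ι → Matrix (Fin d) (Fin q) ℝ)
    (hM : (∑ i, (p i / opNormSq (A * S i)) • (S i * (S i)ᵀ)).PosDef) :
    ∀ x : Fin d → ℝ,
      let g := Aᵀ.mulVec (A.mulVec (x - xstar))
      (∑ i, p i * (((S i)ᵀ.mulVec g ⬝ᵥ (S i)ᵀ.mulVec g) / opNormSq (A * S i)) =
          hM.posSemidef.sqrt.mulVec g ⬝ᵥ hM.posSemidef.sqrt.mulVec g) ∧
        sigmaMinSq (A * hM.posSemidef.sqrt) *
            (A.mulVec (x - xstar) ⬝ᵥ A.mulVec (x - xstar)) ≤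
          hM.posSemidef.sqrt.mulVec g ⬝ᵥ hM.posSemidef.sqrt.mulVec g := by
  intro x g
  constructor
  · rw [hM.posSemidef.sqrt_mulVec_dotProduct_self, sum_smul_mul_transpose_mulVec_dotProduct]
    exact Finset.sum_congr rfl fun i _ => by ring
  · obtain ⟨z, hz⟩ := exists_mul_mulVec_eq_of_isUnit hM.isUnit_sqrt A (x - xstar)
    have h := sigmaMinSq_mul_dotProduct_self_le_of_mem_range (A * hM.posSemidef.sqrt) z
    rwa [hz, transpose_mul, hM.posSemidef.transpose_sqrt, ← mulVec_mulVec] at h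

/-- `𝔼[‖Sᵀ AᵀA(x − x*)‖²/‖AS‖₂²] = ‖M^{1/2} AᵀA(x − x*)‖²
    ≥ σ²_min(A M^{1/2}) ‖x − x*‖²_{AᵀA}` for `M = 𝔼[SSᵀ/‖AS‖₂²]` positive definite. -/
theorem stmt11 {n d q : ℕ} {ι : Type*} [Fintype ι]
    (A : Matrix (Fin n) (Fin d) ℝ) (b : Fin n → ℝ)
    (xstar : Fin d → ℝ) (hstar : Aᵀ.mulVec (A.mulVec xstar) = Aᵀ.mulVec b)
    (p : ι → ℝ) (hp : ∀ i, 0 ≤ p i) (hsum : ∑ i, p i = 1)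
    (S : ι → Matrix (Fin d) (Fin q) ℝ)
    (hM : (∑ i, (p i / opNormSq (A * S i)) • (S i * (S i)ᵀ)).PosDef) :
    ∀ x : Fin d → ℝ,
      let g := Aᵀ.mulVec (A.mulVec (x - xstar))
      (∑ i, p i * (((S i)ᵀ.mulVec g ⬝ᵥ (S i)ᵀ.mulVec g) / opNormSq (A * S i)) =
          hM.posSemidef.sqrt.mulVec g ⬝ᵥ hM.posSemidef.sqrt.mulVec g) ∧
        sigmaMinSq (A * hM.posSemidef.sqrt) *
            (A.mulVec (x - xstar) ⬝ᵥ A.mulVec (x - xstar)) ≤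
          hM.posSemidef.sqrt.mulVec g ⬝ᵥ hM.posSemidef.sqrt.mulVec g :=
  stmt11_general A xstar p S hM
end

section
/- Consider the randomized Kaczmarz iteration applied to the augmented system Âx̂ = b̂ with Â = [[√λ I_n, Ā],[Āᵀ, −√λ I_d]] = [Uᵀ; Vᵀ] (rows partitioned into two blocks) and b̂ = [b̄; 0]. Suppose the current iterate x̂^k satisfies Uᵀ x̂^k = b̄. Then: (a) if the sampled row index i_k belongs to the first block (rows of Uᵀ), the Kaczmarz update leaves the iterate unchanged, x̂^{k+1} = x̂^k; (b) if i_k belongs to the second block (rows of Vᵀ), then x̂^{k+1} still satisfies Uᵀ x̂^{k+1} = b̄. -/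
open Matrix

/-- Wasted iterations of randomized Kaczmarz on the augmented ridge system:
if the first block `Uᵀ x̂ = b̄` is satisfied, then (a) sampling a first-block
row leaves the iterate unchanged, and (b) after sampling a second-block row
the first block is still satisfied. -/
theorem stmt19 {n d : ℕ} (Ab : Matrix (Fin n) (Fin d) ℝ) (bb : Fin n → ℝ)
    (l : ℝ) (hl : 0 < l) (xhat : Fin n ⊕ Fin d → ℝ) :
    let Ahat : Matrix (Fin n ⊕ Fin d) (Fin n ⊕ Fin d) ℝ :=
      Matrix.fromBlocks (Real.sqrt l • (1 : Matrix (Fin n) (Fin n) ℝ)) Ab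
        Abᵀ (-(Real.sqrt l) • (1 : Matrix (Fin d) (Fin d) ℝ))
    let bhat : Fin n ⊕ Fin d → ℝ := Sum.elim bb 0
    let upd : (Fin n ⊕ Fin d) → (Fin n ⊕ Fin d → ℝ) := fun i =>
      xhat + ((bhat i - Ahat i ⬝ᵥ xhat) / (Ahat i ⬝ᵥ Ahat i)) • Ahat i
    (∀ j : Fin n, Ahat (Sum.inl j) ⬝ᵥ xhat = bhat (Sum.inl j)) →
      ((∀ j : Fin n, upd (Sum.inl j) = xhat) ∧
        ∀ (i : Fin d) (j : Fin n),
          Ahat (Sum.inl j) ⬝ᵥ upd (Sum.inr i) = bhat (Sum.inl j)) := by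
  intro Ahat bhat upd h
  have horth : ∀ (j : Fin n) (i : Fin d), Ahat (Sum.inl j) ⬝ᵥ Ahat (Sum.inr i) = 0 := by
    intro j i
    simp only [Ahat, dotProduct, Fintype.sum_sum_type, Matrix.fromBlocks_apply₁₁,
      Matrix.fromBlocks_apply₁₂, Matrix.fromBlocks_apply₂₁, Matrix.fromBlocks_apply₂₂,
      Matrix.smul_apply, Matrix.one_apply, Matrix.transpose_apply,
      Matrix.neg_apply, smul_eq_mul]
    rw [Finset.sum_eq_single j, Finset.sum_eq_single i] <;>
      simp (config := {contextual := true}) [eq_comm, mul_comm]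
  constructor
  · intro j
    simp only [upd, h j, sub_self, zero_div, zero_smul, add_zero]
  · intro i j
    simp only [upd, dotProduct_add, dotProduct_smul, h j, horth j i,
      smul_eq_mul, mul_zero, add_zero]
end
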